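/- Let m ∈ M with ‖m‖₁ > 0, let a ∈ (0,1), and let c ∈ M be a minimizer of the soft-Dice loss SD_m over M. Then the thresholded function I_{[a,1]}∘c (equal to 1 where c ≥ a and 0 elsewhere) is a maximizer of the Dice score D_m over S. -/

import Mathlib

open MeasureTheory Filter

noncomputable section

/-- The unit cube `[0,1]^n`. -/
def cube (n : ℕ) : Set (Fin n → ℝ) := Set.univ.pi fun _ => Set.Icc (0:ℝ) 1

/-- The (normalized) Lebesgue measure on the unit cube. -/
def lam (n : ℕ) : Measure (Fin n → ℝ) := volume.restrict (cube n)

/-- The `L¹`-volume `‖f‖₁ = ∫ f dλ` (for nonnegative `f`). -/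
def vol1 (n : ℕ) (f : (Fin n → ℝ) → ℝ) : ℝ := ∫ ω, f ω ∂(lam n)

/-- The Dice score `D_m(s) = 2∫ s·m dλ / (‖s‖₁ + ‖m‖₁)`. -/
def Dice (n : ℕ) (m s : (Fin n → ℝ) → ℝ) : ℝ :=
  2 * (∫ ω, s ω * m ω ∂(lam n)) / (vol1 n s + vol1 n m)

/-- The soft-Dice loss `SD_m(c) = 1 - 2∫ c·m dλ / (‖c‖₁ + ‖m‖₁)`. -/
def softDice (n : ℕ) (m c : (Fin n → ℝ) → ℝ) : ℝ :=
  1 - 2 * (∫ ω, c ω * m ω ∂(lam n)) / (vol1 n c + vol1 n m)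

/-- Membership in `M`: measurable with values in `[0,1]`. -/
def MemM (n : ℕ) (m : (Fin n → ℝ) → ℝ) : Prop :=
  Measurable m ∧ ∀ ω, m ω ∈ Set.Icc (0:ℝ) 1

/-- Membership in `S`: measurable with values in `{0,1}`. -/
def MemS (n : ℕ) (s : (Fin n → ℝ) → ℝ) : Prop :=
  Measurable s ∧ ∀ ω, s ω = 0 ∨ s ω = 1

/-- The set of soft-Dice values over `M`. -/
def SDvals (n : ℕ) (m : (Fin n → ℝ) → ℝ) : Set ℝ :=
  {x : ℝ | ∃ c, MemM n c ∧ x = softDice n m c}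

/-- The set of Dice values over `S`. -/
def Dvals (n : ℕ) (m : (Fin n → ℝ) → ℝ) : Set ℝ :=
  {x : ℝ | ∃ s, MemS n s ∧ x = Dice n m s}

/-!
Since `SD_m = 1 - D_m`, the minimizer `c` maximizes `D_m` over `M`; put `d = D_m(c)`. For
`f ∈ M`, `D_m(f) ≤ d` is equivalent to `∫ f g ≤ d ‖m‖₁` with `g = 2m - d`, with equality at `c`.
Testing against `1_{g > 0} ∈ M`, whose value `∫ g⁺` is the pointwise maximum, forces
`c g = g⁺` a.e. (bathtub principle): `c = 1` a.e. where `g > 0` and `c = 0` a.e. where `g < 0`.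
So every threshold `1_{c ≥ a}`, `0 < a ≤ 1`, also has `∫ 1_{c ≥ a} g = d ‖m‖₁`, i.e. Dice score
`d`, which bounds `D_m` on `S ⊆ M`.
-/

open Set

lemma mul_le_max_zero {x y : ℝ} (hx : x ∈ Icc (0 : ℝ) 1) : x * y ≤ max y 0 := by
  rcases le_total y 0 with hy | hy
  · rw [max_eq_right hy]; nlinarith [hx.1]
  · rw [max_eq_left hy]; nlinarith [hx.2]

lemma ite_pos_mul_eq_max_zero (y : ℝ) : (if 0 < y then (1 : ℝ) else 0) * y = max y 0 := by
  split_ifs with hy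
  · rw [one_mul, max_eq_left hy.le]
  · rw [zero_mul, max_eq_right (not_lt.1 hy)]

lemma ite_le_mul_eq_of_mul_eq_max_zero {a x y : ℝ} (ha : a ∈ Ioc (0 : ℝ) 1)
    (hxy : x * y = max y 0) :
    (if a ≤ x then (1 : ℝ) else 0) * y = x * y := by
  rcases lt_trichotomy y 0 with hy | rfl | hy
  · rw [max_eq_right hy.le] at hxy
    have hx0 : x = 0 := (mul_eq_zero.1 hxy).resolve_right hy.ne
    rw [if_neg (by rw [hx0]; exact not_le.2 ha.1), hx0]
  · simp
  · rw [max_eq_left hy.le] at hxy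
    have hx1 : x = 1 := by
      have : (x - 1) * y = 0 := by linear_combination hxy
      linarith [(mul_eq_zero.1 this).resolve_right hy.ne']
    rw [if_pos (by rw [hx1]; exact ha.2), hx1]

theorem integral_ite_le_mul_eq_of_max_zero_le {Ω : Type*} [MeasurableSpace Ω] {μ : Measure Ω}
    {c g : Ω → ℝ} {a : ℝ} (hc : AEStronglyMeasurable c μ)
    (hc01 : ∀ ω, c ω ∈ Icc (0 : ℝ) 1) (hg : Integrable g μ) (ha : a ∈ Ioc (0 : ℝ) 1)
    (hle : ∫ ω, max (g ω) 0 ∂μ ≤ ∫ ω, c ω * g ω ∂μ) :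
    ∫ ω, (if a ≤ c ω then (1 : ℝ) else 0) * g ω ∂μ = ∫ ω, c ω * g ω ∂μ := by
  have hcg : Integrable (fun ω => c ω * g ω) μ :=
    hg.bdd_mul hc (c := 1) (ae_of_all _ fun ω => by
      rw [Real.norm_eq_abs, abs_le]; exact ⟨by linarith [(hc01 ω).1], (hc01 ω).2⟩)
  have hmax : (fun ω => c ω * g ω) =ᵐ[μ] fun ω => max (g ω) 0 :=
    (integral_eq_iff_of_ae_le hcg hg.pos_part (ae_of_all _ fun ω => mul_le_max_zero (hc01 ω))).1
      (le_antisymm (integral_mono hcg hg.pos_part fun ω => mul_le_max_zero (hc01 ω)) hle)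
  refine integral_congr_ae ?_
  filter_upwards [hmax] with ω hω using ite_le_mul_eq_of_mul_eq_max_zero ha hω

lemma cube_volume (n : ℕ) : volume (cube n) = 1 := by
  rw [cube, volume_pi_pi]
  simp [Real.volume_Icc]

instance (n : ℕ) : IsProbabilityMeasure (lam n) :=
  ⟨by rw [lam, Measure.restrict_apply_univ, cube_volume n]⟩

section Dice

variable {n : ℕ} {m c f : (Fin n → ℝ) → ℝ}

lemma MemM.integrable (hf : MemM n f) : Integrable f (lam n) :=
  .of_bound hf.1.aestronglyMeasurable 1 (ae_of_all _ fun ω => by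
    rw [Real.norm_eq_abs, abs_le]; exact ⟨by linarith [(hf.2 ω).1], (hf.2 ω).2⟩)

lemma MemM.mul (hf : MemM n f) (hm : MemM n m) : MemM n fun ω => f ω * m ω :=
  ⟨hf.1.mul hm.1, fun ω => ⟨mul_nonneg (hf.2 ω).1 (hm.2 ω).1,
    mul_le_one₀ (hf.2 ω).2 (hm.2 ω).1 (hm.2 ω).2⟩⟩

lemma memS_ite {p : (Fin n → ℝ) → Prop} [DecidablePred p] (hp : MeasurableSet {ω | p ω}) :
    MemS n fun ω => if p ω then 1 else 0 :=
  ⟨measurable_const.ite hp measurable_const, fun ω => by by_cases h : p ω <;> simp [h]⟩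

lemma MemS.memM (hf : MemS n f) : MemM n f :=
  ⟨hf.1, fun ω => by rcases hf.2 ω with h | h <;> simp [h]⟩

lemma vol1_nonneg (hf : MemM n f) : 0 ≤ vol1 n f :=
  integral_nonneg fun ω => (hf.2 ω).1

lemma dice_le_one (hf : MemM n f) (hm : MemM n m) : Dice n m f ≤ 1 := by
  refine div_le_one_of_le₀ ?_ (add_nonneg (vol1_nonneg hf) (vol1_nonneg hm))
  rw [vol1, vol1, ← integral_add hf.integrable hm.integrable, ← integral_const_mul]
  exact integral_mono ((hf.mul hm).integrable.const_mul 2) (hf.integrable.add hm.integrable)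
    fun ω => by
      have := mul_le_of_le_one_right (hf.2 ω).1 (hm.2 ω).2
      have := mul_le_of_le_one_left (hm.2 ω).1 (hf.2 ω).2
      linarith

lemma softDice_eq_one_sub_dice : softDice n m f = 1 - Dice n m f := rfl

lemma dice_le_of_softDice_eq_sInf (hm : MemM n m) (hmin : softDice n m c = sInf (SDvals n m))
    (hf : MemM n f) : Dice n m f ≤ Dice n m c := by
  have hbdd : BddBelow (SDvals n m) := ⟨0, by
    rintro _ ⟨g, hg, rfl⟩
    rw [softDice_eq_one_sub_dice]
    linarith [dice_le_one hg hm]⟩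
  have := hmin ▸ csInf_le hbdd ⟨f, hf, rfl⟩
  rw [softDice_eq_one_sub_dice, softDice_eq_one_sub_dice] at this
  linarith

lemma integral_mul_two_mul_sub (hf : MemM n f) (hm : MemM n m) (d : ℝ) :
    ∫ ω, f ω * (2 * m ω - d) ∂lam n = 2 * ∫ ω, f ω * m ω ∂lam n - d * vol1 n f := by
  simp_rw [mul_sub, mul_left_comm _ (2 : ℝ)]
  rw [integral_sub ((hf.mul hm).integrable.const_mul 2) (hf.integrable.mul_const d),
    integral_const_mul, integral_mul_const, vol1, mul_comm d]

lemma dice_le_iff (hf : MemM n f) (hm : MemM n m) (hpos : 0 < vol1 n m) (d : ℝ) :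
    Dice n m f ≤ d ↔ ∫ ω, f ω * (2 * m ω - d) ∂lam n ≤ d * vol1 n m := by
  rw [Dice, div_le_iff₀ (by linarith [vol1_nonneg hf]), integral_mul_two_mul_sub hf hm]
  constructor <;> intro h <;> linarith

lemma dice_eq_iff (hf : MemM n f) (hm : MemM n m) (hpos : 0 < vol1 n m) (d : ℝ) :
    Dice n m f = d ↔ ∫ ω, f ω * (2 * m ω - d) ∂lam n = d * vol1 n m := by
  rw [Dice, div_eq_iff (by linarith [vol1_nonneg hf]), integral_mul_two_mul_sub hf hm]
  constructor <;> intro h <;> linarith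

end Dice

theorem thresholded_soft_dice_minimizer_is_dice_maximizer
    (n : ℕ) (m : (Fin n → ℝ) → ℝ) (hm : MemM n m) (hpos : 0 < vol1 n m)
    (a : ℝ) (ha : a ∈ Set.Ioo (0:ℝ) 1)
    (c : (Fin n → ℝ) → ℝ) (hc : MemM n c)
    (hmin : softDice n m c = sInf (SDvals n m)) :
    Dice n m (fun ω => if a ≤ c ω then (1:ℝ) else 0) = sSup (Dvals n m) := by
  set d := Dice n m c
  have hDle : ∀ f, MemM n f → Dice n m f ≤ d := fun f => dice_le_of_softDice_eq_sInf hm hmin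
  have hg : Measurable fun ω => 2 * m ω - d := (hm.1.const_mul 2).sub measurable_const
  have hc_opt : ∫ ω, c ω * (2 * m ω - d) ∂lam n = d * vol1 n m := (dice_eq_iff hc hm hpos d).1 rfl
  have hpos_part : ∫ ω, max (2 * m ω - d) 0 ∂lam n ≤ d * vol1 n m := by
    have hM := (memS_ite (measurableSet_lt (measurable_const (a := (0 : ℝ))) hg)).memM
    simpa only [ite_pos_mul_eq_max_zero] using (dice_le_iff hM hm hpos d).1 (hDle _ hM)
  have hS := memS_ite (p := fun ω => a ≤ c ω) (measurableSet_le measurable_const hc.1)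
  have hthr : Dice n m (fun ω => if a ≤ c ω then (1:ℝ) else 0) = d :=
    (dice_eq_iff hS.memM hm hpos d).2 <| .trans (integral_ite_le_mul_eq_of_max_zero_le
      hc.1.aestronglyMeasurable hc.2 ((hm.integrable.const_mul 2).sub (integrable_const d))
      ⟨ha.1, ha.2.le⟩ (hpos_part.trans hc_opt.ge)) hc_opt
  have hgreatest : IsGreatest (Dvals n m) d := by
    refine ⟨⟨_, hS, hthr.symm⟩, ?_⟩
    rintro _ ⟨f, hf, rfl⟩
    exact hDle f hf.memM
  rw [hthr, hgreatest.csSup_eq]
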